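/- arXiv:1207.4243 — 6 statements merged into one kernel-verified Lean document; each statement's English description precedes it below -/
import Mathlib

section
/- Let f, h : [a,b] → ℝ be differentiable with a < x < b, and suppose |f'(t)| ≤ M for all t ∈ (a,b). Then |((h(b)-h(a))/(b-a))·f(x) - (1/(b-a)) ∫_a^b h'(t) f(t) dt| ≤ (M/(b-a)) · [∫_a^x |h(t)-h(a)| dt + ∫_x^b |h(b)-h(t)| dt]. -/
open MeasureTheory intervalIntegral

lemma ostrowski_bound_aux (M c d : ℝ) (g f' : ℝ → ℝ) (hcd : c ≤ d)
    (hint : IntervalIntegrable (fun t => f' t * g t) volume c d)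
    (hgint : IntervalIntegrable (fun t => |g t|) volume c d)
    (hbd : ∀ t ∈ Set.Ioo c d, |f' t| ≤ M) :
    |∫ t in c..d, f' t * g t| ≤ M * ∫ t in c..d, |g t| := by
  have hres : volume.restrict (Set.Icc c d) = volume.restrict (Set.Ioo c d) :=
    Measure.restrict_congr_set Ioo_ae_eq_Icc.symm
  have hae : ∀ᵐ t ∂(volume.restrict (Set.Icc c d)), t ∈ Set.Ioo c d := by
    rw [hres]; exact ae_restrict_mem measurableSet_Ioo
  calc |∫ t in c..d, f' t * g t| ≤ ∫ t in c..d, |f' t * g t| :=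
        abs_integral_le_integral_abs hcd
    _ ≤ ∫ t in c..d, M * |g t| := by
        refine integral_mono_ae_restrict hcd hint.abs ((hgint.const_mul M)) ?_
        filter_upwards [hae] with t ht
        rw [abs_mul]
        exact mul_le_mul_of_nonneg_right (hbd t ht) (abs_nonneg _)
    _ = M * ∫ t in c..d, |g t| := integral_const_mul M _

theorem weighted_ostrowski_inequality
    (a b x M : ℝ) (f h f' h' : ℝ → ℝ)
    (hab : a < b) (hx : x ∈ Set.Ioo a b)
    (hf : ∀ t ∈ Set.Icc a b, HasDerivAt f (f' t) t)
    (hh : ∀ t ∈ Set.Icc a b, HasDerivAt h (h' t) t)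
    (hf'int : IntervalIntegrable f' volume a b)
    (hh'int : IntervalIntegrable h' volume a b)
    (hM : ∀ t ∈ Set.Ioo a b, |f' t| ≤ M) :
    |(h b - h a) / (b - a) * f x - (1 / (b - a)) * ∫ t in a..b, h' t * f t|
      ≤ M / (b - a) * ((∫ t in a..x, |h t - h a|) + ∫ t in x..b, |h b - h t|) := by
  obtain ⟨hax, hxb⟩ := hx
  have hba : (0:ℝ) < b - a := sub_pos.2 hab
  have hMnn : 0 ≤ M := le_trans (abs_nonneg _) (hM x ⟨hax, hxb⟩)
  have hsub1 : Set.uIcc a x ⊆ Set.Icc a b := by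
    rw [Set.uIcc_of_le hax.le]
    exact Set.Icc_subset_Icc le_rfl hxb.le
  have hsub2 : Set.uIcc x b ⊆ Set.Icc a b := by
    rw [Set.uIcc_of_le hxb.le]
    exact Set.Icc_subset_Icc hax.le le_rfl
  have hcf : ContinuousOn f (Set.Icc a b) := fun t ht => (hf t ht).continuousAt.continuousWithinAt
  have hch : ContinuousOn h (Set.Icc a b) := fun t ht => (hh t ht).continuousAt.continuousWithinAt
  -- integrability pieces
  have hf'1 : IntervalIntegrable f' volume a x :=
    hf'int.mono_set (by rw [Set.uIcc_of_le hax.le, Set.uIcc_of_le hab.le]; exact Set.Icc_subset_Icc le_rfl hxb.le)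
  have hf'2 : IntervalIntegrable f' volume x b :=
    hf'int.mono_set (by rw [Set.uIcc_of_le hxb.le, Set.uIcc_of_le hab.le]; exact Set.Icc_subset_Icc hax.le le_rfl)
  have hh'1 : IntervalIntegrable h' volume a x :=
    hh'int.mono_set (by rw [Set.uIcc_of_le hax.le, Set.uIcc_of_le hab.le]; exact Set.Icc_subset_Icc le_rfl hxb.le)
  have hh'2 : IntervalIntegrable h' volume x b :=
    hh'int.mono_set (by rw [Set.uIcc_of_le hxb.le, Set.uIcc_of_le hab.le]; exact Set.Icc_subset_Icc hax.le le_rfl)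
  -- integration by parts on [a, x] with u = f, v = h - h a
  have I1 : ∫ t in a..x, f t * h' t
      = f x * (h x - h a) - f a * (h a - h a) - ∫ t in a..x, f' t * (h t - h a) := by
    have := integral_mul_deriv_eq_deriv_mul (a := a) (b := x)
      (u := f) (v := fun t => h t - h a) (u' := f') (v' := h')
      (fun t ht => hf t (hsub1 ht))
      (fun t ht => (hh t (hsub1 ht)).sub_const (h a)) hf'1 hh'1
    simpa using this
  -- integration by parts on [x, b] with u = f, v = h - h b
  have I2 : ∫ t in x..b, f t * h' t
      = f b * (h b - h b) - f x * (h x - h b) - ∫ t in x..b, f' t * (h t - h b) := by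
    have := integral_mul_deriv_eq_deriv_mul (a := x) (b := b)
      (u := f) (v := fun t => h t - h b) (u' := f') (v' := h')
      (fun t ht => hf t (hsub2 ht))
      (fun t ht => (hh t (hsub2 ht)).sub_const (h b)) hf'2 hh'2
    simpa using this
  -- split the main integral
  have hfh1 : IntervalIntegrable (fun t => h' t * f t) volume a x :=
    hh'1.mul_continuousOn (hcf.mono hsub1)
  have hfh2 : IntervalIntegrable (fun t => h' t * f t) volume x b :=
    hh'2.mul_continuousOn (hcf.mono hsub2)
  have hsplit : ∫ t in a..b, h' t * f t
      = (∫ t in a..x, h' t * f t) + ∫ t in x..b, h' t * f t :=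
    (integral_add_adjacent_intervals hfh1 hfh2).symm
  have hcomm1 : ∫ t in a..x, h' t * f t = ∫ t in a..x, f t * h' t := by
    simp_rw [mul_comm]
  have hcomm2 : ∫ t in x..b, h' t * f t = ∫ t in x..b, f t * h' t := by
    simp_rw [mul_comm]
  set A1 := ∫ t in a..x, f' t * (h t - h a) with hA1
  set A2 := ∫ t in x..b, f' t * (h t - h b) with hA2
  have key : (h b - h a) * f x - (∫ t in a..b, h' t * f t) = A1 + A2 := by
    rw [hsplit, hcomm1, hcomm2, I1, I2]; ring
  -- bounds for A1 and A2
  have hg1c : ContinuousOn (fun t => h t - h a) (Set.uIcc a x) :=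
    ((hch.mono hsub1).sub continuousOn_const)
  have hg2c : ContinuousOn (fun t => h t - h b) (Set.uIcc x b) :=
    ((hch.mono hsub2).sub continuousOn_const)
  have hB1 : |A1| ≤ M * ∫ t in a..x, |h t - h a| := by
    refine ostrowski_bound_aux M a x _ f' hax.le
      (hf'1.mul_continuousOn hg1c) (hg1c.abs.intervalIntegrable) ?_
    exact fun t ht => hM t ⟨ht.1, ht.2.trans hxb⟩
  have hB2 : |A2| ≤ M * ∫ t in x..b, |h t - h b| := by
    refine ostrowski_bound_aux M x b _ f' hxb.le
      (hf'2.mul_continuousOn hg2c) (hg2c.abs.intervalIntegrable) ?_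
    exact fun t ht => hM t ⟨hax.trans ht.1, ht.2⟩
  have habs : ∫ t in x..b, |h t - h b| = ∫ t in x..b, |h b - h t| := by
    simp_rw [abs_sub_comm]
  -- conclude
  have hmain : |(h b - h a) / (b - a) * f x - (1 / (b - a)) * ∫ t in a..b, h' t * f t|
      = (1 / (b - a)) * |(h b - h a) * f x - ∫ t in a..b, h' t * f t| := by
    rw [show (h b - h a) / (b - a) * f x - (1 / (b - a)) * ∫ t in a..b, h' t * f t
        = (1 / (b - a)) * ((h b - h a) * f x - ∫ t in a..b, h' t * f t) by ring]
    rw [abs_mul, abs_of_pos (by positivity : (0:ℝ) < 1 / (b - a))]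
  rw [hmain, key]
  have : |A1 + A2| ≤ M * ((∫ t in a..x, |h t - h a|) + ∫ t in x..b, |h b - h t|) := by
    calc |A1 + A2| ≤ |A1| + |A2| := abs_add_le _ _
      _ ≤ M * (∫ t in a..x, |h t - h a|) + M * ∫ t in x..b, |h t - h b| :=
          add_le_add hB1 hB2
      _ = M * ((∫ t in a..x, |h t - h a|) + ∫ t in x..b, |h b - h t|) := by
          rw [habs]; ring
  calc (1 / (b - a)) * |A1 + A2|
      ≤ (1 / (b - a)) * (M * ((∫ t in a..x, |h t - h a|) + ∫ t in x..b, |h b - h t|)) :=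
        mul_le_mul_of_nonneg_left this (by positivity)
    _ = M / (b - a) * ((∫ t in a..x, |h t - h a|) + ∫ t in x..b, |h b - h t|) := by ring
end

section
/- Let f : {a, a+1, ..., b} → ℝ with a, b ∈ ℤ, a < b, and suppose |f(t+1) - f(t)| ≤ M for all integers t with a ≤ t < b. Then for every integer x with a ≤ x ≤ b, |f(x) - (1/(b-a)) ∑_{t=a}^{b-1} f(t+1)| ≤ (M/(b-a))·(h₂(x,a) + h₂(x,b)), where h₂(x,s) = (x-s)(x-s-1)/2 for integer arguments. -/
open Finset

private lemma tele_aux (a b : ℤ) (f : ℤ → ℝ) (M : ℝ)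
    (hM : ∀ t : ℤ, a ≤ t → t < b → |f (t + 1) - f t| ≤ M) :
    ∀ s, a ≤ s → ∀ t, s ≤ t → t ≤ b → |f t - f s| ≤ M * ((t : ℝ) - s) := by
  intro s hs t hst
  refine Int.le_induction (motive := fun t _ => t ≤ b → |f t - f s| ≤ M * ((t : ℝ) - s)) ?_ ?_ t hst
  · intro _; simp
  · intro t ht ih htb
    have h1 : |f (t+1) - f t| ≤ M := hM t (hs.trans ht) (by omega)
    have h2 : |f t - f s| ≤ M * ((t:ℝ) - s) := ih (by omega)
    calc |f (t+1) - f s| ≤ |f (t+1) - f t| + |f t - f s| := abs_sub_le _ _ _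
      _ ≤ M + M * ((t:ℝ) - s) := add_le_add h1 h2
      _ = M * (((t+1:ℤ):ℝ) - s) := by push_cast; ring

private lemma sum_left (a : ℤ) : ∀ c, a ≤ c →
    ∑ t ∈ Finset.Ico a c, (((c:ℝ)) - t - 1) = ((c:ℝ) - a) * ((c:ℝ) - a - 1) / 2 := by
  refine Int.le_induction ?_ ?_
  · simp
  · intro c hc ih
    have hsplit : Finset.Ico a (c+1) = insert c (Finset.Ico a c) := by
      ext t; simp only [Finset.mem_Ico, Finset.mem_insert]; omega
    rw [hsplit, Finset.sum_insert (by simp)]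
    have hcard : ∑ t ∈ Finset.Ico a c, (1:ℝ) = ((c:ℝ) - a) := by
      rw [Finset.sum_const, Int.card_Ico, nsmul_eq_mul, mul_one]
      have h : ((c - a).toNat : ℤ) = c - a := Int.toNat_of_nonneg (by omega)
      exact_mod_cast h
    have heq : ∑ t ∈ Finset.Ico a c, (((c+1:ℤ):ℝ) - t - 1)
        = (∑ t ∈ Finset.Ico a c, ((c:ℝ) - t - 1)) + ∑ t ∈ Finset.Ico a c, (1:ℝ) := by
      rw [← Finset.sum_add_distrib]; apply Finset.sum_congr rfl; intros; push_cast; ring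
    rw [heq, ih, hcard]
    push_cast
    ring

private lemma sum_right (c : ℤ) : ∀ b, c ≤ b →
    ∑ t ∈ Finset.Ico c b, (((t:ℝ)) + 1 - c) = ((b:ℝ) - c) * ((b:ℝ) - c + 1) / 2 := by
  refine Int.le_induction ?_ ?_
  · simp
  · intro b hb ih
    have hsplit : Finset.Ico c (b+1) = insert b (Finset.Ico c b) := by
      ext t; simp only [Finset.mem_Ico, Finset.mem_insert]; omega
    rw [hsplit, Finset.sum_insert (by simp), ih]
    push_cast
    ring

theorem discrete_ostrowski_inequality
    (a b : ℤ) (f : ℤ → ℝ) (M : ℝ)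
    (hab : a < b)
    (hM : ∀ t : ℤ, a ≤ t → t < b → |f (t + 1) - f t| ≤ M) :
    ∀ x : ℤ, a ≤ x → x ≤ b →
      |f x - (1 / ((b : ℝ) - (a : ℝ))) * ∑ t ∈ Finset.Ico a b, f (t + 1)|
        ≤ M / ((b : ℝ) - (a : ℝ)) *
          (((x : ℝ) - a) * (((x : ℝ) - a) - 1) / 2
            + ((x : ℝ) - b) * (((x : ℝ) - b) - 1) / 2) := by
  intro x hax hxb
  have hba : (0:ℝ) < (b:ℝ) - a := by
    have : (a:ℝ) < b := by exact_mod_cast hab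
    linarith
  have hcard : ((Finset.Ico a b).card : ℝ) = (b:ℝ) - a := by
    rw [Int.card_Ico]
    have h : ((b - a).toNat : ℤ) = b - a := Int.toNat_of_nonneg (by omega)
    exact_mod_cast h
  have hpt : ∀ t ∈ Finset.Ico a b, |f x - f (t+1)| ≤ M * |((x:ℝ)) - t - 1| := by
    intro t ht
    rw [Finset.mem_Ico] at ht
    rcases le_or_gt (t+1) x with h | h
    · have hb2 := tele_aux a b f M hM (t+1) (by omega) x h hxb
      calc |f x - f (t+1)| ≤ M * ((x:ℝ) - ((t+1:ℤ):ℝ)) := hb2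
        _ = M * |((x:ℝ)) - t - 1| := by
            rw [abs_of_nonneg (show (0:ℝ) ≤ (x:ℝ) - t - 1 by exact_mod_cast by omega)]
            push_cast; ring
    · have hb2 := tele_aux a b f M hM x hax (t+1) (by omega) (by omega)
      rw [abs_sub_comm]
      calc |f (t+1) - f x| ≤ M * (((t+1:ℤ):ℝ) - x) := hb2
        _ = M * |((x:ℝ)) - t - 1| := by
            rw [abs_of_nonpos (show ((x:ℝ) - t - 1) ≤ 0 by exact_mod_cast by omega)]
            push_cast; ring
  have hrw : f x - (1 / ((b : ℝ) - (a : ℝ))) * ∑ t ∈ Finset.Ico a b, f (t + 1)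
      = (1 / ((b:ℝ) - a)) * ∑ t ∈ Finset.Ico a b, (f x - f (t+1)) := by
    rw [Finset.sum_sub_distrib, Finset.sum_const, nsmul_eq_mul, hcard]
    field_simp
  rw [hrw, abs_mul, abs_of_pos (show (0:ℝ) < 1 / ((b:ℝ) - a) by positivity)]
  have h1 : |∑ t ∈ Finset.Ico a b, (f x - f (t+1))|
      ≤ ∑ t ∈ Finset.Ico a b, M * |((x:ℝ)) - t - 1| :=
    (Finset.abs_sum_le_sum_abs _ _).trans (Finset.sum_le_sum hpt)
  have hsum : ∑ t ∈ Finset.Ico a b, |((x:ℝ)) - t - 1|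
      = ((x : ℝ) - a) * (((x : ℝ) - a) - 1) / 2 + ((x : ℝ) - b) * (((x : ℝ) - b) - 1) / 2 := by
    rw [← Finset.Ico_union_Ico_eq_Ico hax hxb,
      Finset.sum_union (Finset.Ico_disjoint_Ico_consecutive a x b)]
    have hl : ∑ t ∈ Finset.Ico a x, |((x:ℝ)) - t - 1| = ∑ t ∈ Finset.Ico a x, ((x:ℝ) - t - 1) := by
      apply Finset.sum_congr rfl
      intro t ht
      rw [Finset.mem_Ico] at ht
      rw [abs_of_nonneg (show (0:ℝ) ≤ (x:ℝ) - t - 1 by exact_mod_cast by omega)]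
    have hr : ∑ t ∈ Finset.Ico x b, |((x:ℝ)) - t - 1| = ∑ t ∈ Finset.Ico x b, ((t:ℝ) + 1 - x) := by
      apply Finset.sum_congr rfl
      intro t ht
      rw [Finset.mem_Ico] at ht
      rw [abs_of_nonpos (show ((x:ℝ) - t - 1) ≤ 0 by exact_mod_cast by omega)]
      ring
    rw [hl, hr, sum_left a x hax, sum_right x b hxb]
    ring
  calc (1 / ((b:ℝ) - a)) * |∑ t ∈ Finset.Ico a b, (f x - f (t+1))|
      ≤ (1 / ((b:ℝ) - a)) * ∑ t ∈ Finset.Ico a b, M * |((x:ℝ)) - t - 1| :=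
        mul_le_mul_of_nonneg_left h1 (by positivity)
    _ = M / ((b:ℝ) - a) * ∑ t ∈ Finset.Ico a b, |((x:ℝ)) - t - 1| := by
        rw [← Finset.mul_sum]; ring
    _ = _ := by rw [hsum]
end

section
/- Let g : [a,b] → ℝ be square-integrable with γ ≤ g(t) ≤ Γ for all t ∈ [a,b]. Then (1/(b-a)) ∫_a^b g(t)² dt - ((1/(b-a)) ∫_a^b g(t) dt)² ≤ ((Γ-γ)/2)². -/
open MeasureTheory intervalIntegral

theorem gruss_variance_bound
    (a b γ Γ : ℝ) (g : ℝ → ℝ)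
    (hab : a < b)
    (hgint : IntervalIntegrable g volume a b)
    (hg2 : IntervalIntegrable (fun t => g t ^ 2) volume a b)
    (hbound : ∀ t ∈ Set.Icc a b, γ ≤ g t ∧ g t ≤ Γ) :
    (1 / (b - a)) * (∫ t in a..b, g t ^ 2)
      - ((1 / (b - a)) * ∫ t in a..b, g t) ^ 2
      ≤ ((Γ - γ) / 2) ^ 2 := by
  have hb : (0:ℝ) < b - a := by linarith
  have hnonneg : 0 ≤ ∫ t in a..b, (((Γ + γ) * g t - γ * Γ) - g t ^ 2) := by
    apply intervalIntegral.integral_nonneg hab.le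
    intro u hu
    obtain ⟨h1, h2⟩ := hbound u hu
    nlinarith [mul_nonneg (sub_nonneg.mpr h1) (sub_nonneg.mpr h2)]
  have heval : (∫ t in a..b, (((Γ + γ) * g t - γ * Γ) - g t ^ 2))
      = ((Γ + γ) * (∫ t in a..b, g t) - γ * Γ * (b - a)) - (∫ t in a..b, g t ^ 2) := by
    rw [intervalIntegral.integral_sub
        ((hgint.const_mul (Γ + γ)).sub intervalIntegrable_const) hg2,
      intervalIntegral.integral_sub (hgint.const_mul (Γ + γ)) intervalIntegrable_const,
      intervalIntegral.integral_const_mul, intervalIntegral.integral_const, smul_eq_mul]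
    ring
  rw [heval] at hnonneg
  set I2 := ∫ t in a..b, g t ^ 2
  set I1 := ∫ t in a..b, g t
  rw [div_mul_eq_mul_div, div_mul_eq_mul_div, div_pow, div_sub_div _ _ (ne_of_gt hb) (by positivity),
    div_le_iff₀ (by positivity)]
  ring_nf
  nlinarith [sq_nonneg ((Γ + γ) * (b - a) - 2 * I1), hb, hnonneg, sq_nonneg (b - a)]
end

section
/- Let a, b, x ∈ ℤ with a ≤ x ≤ b and a < b, f, h : ℤ → ℝ, and α, β ≥ 0 not both zero (with x > a if α ≠ 0 and x < b if β ≠ 0). Define P(x,t) = (α/(α+β))·(h(t)-h(a))/(x-a) for a ≤ t ≤ x-1 and P(x,t) = (-β/(α+β))·(h(b)-h(t))/(b-x) for x ≤ t ≤ b-1. Then ∑_{t=a}^{b-1} P(x,t)·(f(t+1)-f(t)) = f(x)/(α+β)·[α(h(x)-h(a))/(x-a) + β(h(b)-h(x))/(b-x)] - 1/(α+β)·[ α/(x-a) ∑_{t=a}^{x-1} f(t+1)(h(t+1)-h(t)) + β/(b-x) ∑_{t=x}^{b-1} f(t+1)(h(t+1)-h(t)) ]. -/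
open Finset

lemma zsum_split (p q r : ℤ) (hpq : p ≤ q) (hqr : q ≤ r) (g : ℤ → ℝ) :
    (∑ t ∈ Ico p q, g t) + ∑ t ∈ Ico q r, g t = ∑ t ∈ Ico p r, g t := by
  rw [← Finset.Ico_union_Ico_eq_Ico hpq hqr,
    Finset.sum_union (Finset.Ico_disjoint_Ico_consecutive p q r)]

lemma zsum_succ_top (p n : ℤ) (hpn : p ≤ n) (g : ℤ → ℝ) :
    ∑ t ∈ Ico p (n+1), g t = (∑ t ∈ Ico p n, g t) + g n := by
  rw [← zsum_split p n (n+1) hpn (by omega) g]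
  congr 1
  rw [show Ico n (n+1) = {n} by ext t; simp [Finset.mem_Ico]; omega]
  simp

lemma ztele (p : ℤ) (f : ℤ → ℝ) :
    ∀ q, p ≤ q → ∑ t ∈ Ico p q, (f (t+1) - f t) = f q - f p := by
  refine Int.le_induction ?_ ?_
  · simp
  · intro n hn ih
    rw [zsum_succ_top p n hn, ih]; ring

lemma zabel1 (p : ℤ) (f h : ℤ → ℝ) :
    ∀ q, p ≤ q → ∑ t ∈ Ico p q, (h t - h p) * (f (t+1) - f t)
      = (h q - h p) * f q - ∑ t ∈ Ico p q, f (t+1) * (h (t+1) - h t) := by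
  refine Int.le_induction ?_ ?_
  · simp
  · intro n hn ih
    rw [zsum_succ_top p n hn, zsum_succ_top p n hn, ih]; ring

lemma zabel2 (p q : ℤ) (hpq : p ≤ q) (f h : ℤ → ℝ) :
    ∑ t ∈ Ico p q, (h q - h t) * (f (t+1) - f t)
      = (∑ t ∈ Ico p q, f (t+1) * (h (t+1) - h t)) - (h q - h p) * f p := by
  have e : ∀ t ∈ Ico p q, (h q - h t)*(f (t+1)-f t)
      = (h q - h p)*(f (t+1)-f t) - (h t - h p)*(f (t+1)-f t) := by intros; ring
  rw [Finset.sum_congr rfl e, Finset.sum_sub_distrib, ← Finset.mul_sum,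
    ztele p f q hpq, zabel1 p f h q hpq]
  ring

theorem discrete_weighted_montgomery_identity
    (a b x : ℤ) (α β : ℝ) (f h : ℤ → ℝ) (P : ℤ → ℝ)
    (hab : a < b) (hax : a ≤ x) (hxb : x ≤ b)
    (hα : 0 ≤ α) (hβ : 0 ≤ β) (hαβ : 0 < α + β)
    (hxa : α ≠ 0 → a < x) (hbx : β ≠ 0 → x < b)
    (hP : ∀ t : ℤ, P t = if t < x
        then α / (α + β) * (h t - h a) / ((x : ℝ) - (a : ℝ))
        else -β / (α + β) * (h b - h t) / ((b : ℝ) - (x : ℝ))) :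
    ∑ t ∈ Finset.Ico a b, P t * (f (t + 1) - f t)
      = f x / (α + β) * (α * (h x - h a) / ((x : ℝ) - (a : ℝ))
            + β * (h b - h x) / ((b : ℝ) - (x : ℝ)))
        - 1 / (α + β) *
            (α / ((x : ℝ) - (a : ℝ)) *
                ∑ t ∈ Finset.Ico a x, f (t + 1) * (h (t + 1) - h t)
             + β / ((b : ℝ) - (x : ℝ)) *
                ∑ t ∈ Finset.Ico x b, f (t + 1) * (h (t + 1) - h t)) := by
  have hne : α + β ≠ 0 := ne_of_gt hαβ
  set S1 : ℝ := ∑ t ∈ Finset.Ico a x, f (t + 1) * (h (t + 1) - h t) with hS1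
  set S2 : ℝ := ∑ t ∈ Finset.Ico x b, f (t + 1) * (h (t + 1) - h t) with hS2
  have key1 : ∑ t ∈ Finset.Ico a x, P t * (f (t + 1) - f t)
      = α / ((α + β) * ((x:ℝ) - a)) * ((h x - h a) * f x - S1) := by
    by_cases hα0 : α = 0
    · have hz : ∀ t ∈ Finset.Ico a x, P t * (f (t + 1) - f t) = 0 := by
        intro t ht
        rw [hP t, if_pos (Finset.mem_Ico.mp ht).2, hα0]
        simp
      rw [Finset.sum_congr rfl hz, hα0]
      simp
    · have hax' : a < x := hxa hα0
      have hxane : (x:ℝ) - a ≠ 0 := by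
        have : (a:ℝ) < x := by exact_mod_cast hax'
        linarith
      have he : ∀ t ∈ Finset.Ico a x, P t * (f (t + 1) - f t)
          = α / ((α + β) * ((x:ℝ) - a)) * ((h t - h a) * (f (t+1) - f t)) := by
        intro t ht
        rw [hP t, if_pos (Finset.mem_Ico.mp ht).2]
        field_simp
        try ring
      rw [Finset.sum_congr rfl he, ← Finset.mul_sum, zabel1 a f h x (le_of_lt hax')]
  have key2 : ∑ t ∈ Finset.Ico x b, P t * (f (t + 1) - f t)
      = β / ((α + β) * ((b:ℝ) - x)) * ((h b - h x) * f x - S2) := by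
    by_cases hβ0 : β = 0
    · have hz : ∀ t ∈ Finset.Ico x b, P t * (f (t + 1) - f t) = 0 := by
        intro t ht
        rw [hP t, if_neg (not_lt.mpr (Finset.mem_Ico.mp ht).1), hβ0]
        simp
      rw [Finset.sum_congr rfl hz, hβ0]
      simp
    · have hxb' : x < b := hbx hβ0
      have hbxne : (b:ℝ) - x ≠ 0 := by
        have : (x:ℝ) < b := by exact_mod_cast hxb'
        linarith
      have he : ∀ t ∈ Finset.Ico x b, P t * (f (t + 1) - f t)
          = -(β / ((α + β) * ((b:ℝ) - x))) * ((h b - h t) * (f (t+1) - f t)) := by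
        intro t ht
        rw [hP t, if_neg (not_lt.mpr (Finset.mem_Ico.mp ht).1)]
        field_simp
        try ring
      rw [Finset.sum_congr rfl he, ← Finset.mul_sum, zabel2 x b (le_of_lt hxb') f h]
      ring
  rw [← zsum_split a x b hax hxb, key1, key2]
  by_cases hα0 : α = 0
  · have hβ0 : β ≠ 0 := fun hb => hne (by rw [hα0, hb]; ring)
    have hxb' : x < b := hbx hβ0
    have hbxne : (b:ℝ) - x ≠ 0 := by
      have : (x:ℝ) < b := by exact_mod_cast hxb'
      linarith
    rw [hα0]
    field_simp
    try ring
  · by_cases hβ0 : β = 0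
    · have hax' : a < x := hxa hα0
      have hxane : (x:ℝ) - a ≠ 0 := by
        have : (a:ℝ) < x := by exact_mod_cast hax'
        linarith
      rw [hβ0]
      field_simp
      try ring
    · have hax' : a < x := hxa hα0
      have hxb' : x < b := hbx hβ0
      have hxane : (x:ℝ) - a ≠ 0 := by
        have : (a:ℝ) < x := by exact_mod_cast hax'
        linarith
      have hbxne : (b:ℝ) - x ≠ 0 := by
        have : (x:ℝ) < b := by exact_mod_cast hxb'
        linarith
      field_simp
      ring
end

section
/- Let f : [a,b] → ℝ be differentiable with |f'| ≤ M on (a,b), and let h : [a,b] → ℝ be differentiable. Taking α = x−a and β = b−x for fixed x with a < x < b, the weighted perturbed inequality specializes to: |((h(b)-h(a))/(b-a))f(x) - ((γ+Γ)/2)·(1/(b-a))[∫_a^x (h(t)-h(a))dt - ∫_x^b (h(b)-h(t))dt] - (1/(b-a))∫_a^b h'(t)f(t)dt| ≤ ((Γ-γ)/2)·(1/(b-a))·[∫_a^x |h(t)-h(a)|dt + ∫_x^b |h(b)-h(t)|dt], whenever γ ≤ f'(t) ≤ Γ on [a,b]. -/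
/-!
Integrating by parts on `[a, x]` and on `[x, b]` turns `(h b - h a) f x - ∫ₐᵇ h' f` into
`∫ₐᵇ P(x, ·) f'` for the kernel `P(x, t) = h t - h a` on `[a, x)` and `-(h b - h t)` on `[x, b]`.
Replacing `f'` by `f' - (γ + Γ) / 2` accounts for the perturbation term, and
`|f' - (γ + Γ) / 2| ≤ (Γ - γ) / 2` bounds what is left by `(Γ - γ) / 2 · ∫ₐᵇ |P(x, ·)|`.
-/

open MeasureTheory intervalIntegral Set

theorem abs_integral_mul_sub_midpoint_mul_integral_le {p q γ Γ : ℝ} {g φ : ℝ → ℝ}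
    (hpq : p ≤ q) (hg : ContinuousOn g (Icc p q)) (hφ : IntervalIntegrable φ volume p q)
    (hbound : ∀ t ∈ Icc p q, γ ≤ φ t ∧ φ t ≤ Γ) :
    |(∫ t in p..q, g t * φ t) - (γ + Γ) / 2 * ∫ t in p..q, g t|
      ≤ (Γ - γ) / 2 * ∫ t in p..q, |g t| := by
  rw [← uIcc_of_le hpq] at hg
  have hgφ : IntervalIntegrable (fun t => g t * φ t) volume p q := hφ.continuousOn_mul hg
  rw [← intervalIntegral.integral_const_mul,
    ← integral_sub hgφ (hg.intervalIntegrable.const_mul _), ← intervalIntegral.integral_const_mul,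
    ← Real.norm_eq_abs]
  refine norm_integral_le_of_norm_le hpq (Filter.Eventually.of_forall fun t ht => ?_)
    (hg.intervalIntegrable.abs.const_mul _)
  obtain ⟨hγ, hΓ⟩ := hbound t (Ioc_subset_Icc_self ht)
  have hmid : |φ t - (γ + Γ) / 2| ≤ (Γ - γ) / 2 := abs_le.2 ⟨by linarith, by linarith⟩
  calc ‖g t * φ t - (γ + Γ) / 2 * g t‖ = |g t| * |φ t - (γ + Γ) / 2| := by
        rw [Real.norm_eq_abs, ← abs_mul]; congr 1; ring
    _ ≤ |g t| * ((Γ - γ) / 2) := by gcongr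
    _ = (Γ - γ) / 2 * |g t| := mul_comm _ _

theorem generalized_montgomery_identity {a b x : ℝ} {f h f' h' : ℝ → ℝ}
    (hx : x ∈ uIcc a b)
    (hf : ∀ t ∈ uIcc a b, HasDerivAt f (f' t) t) (hh : ∀ t ∈ uIcc a b, HasDerivAt h (h' t) t)
    (hf'int : IntervalIntegrable f' volume a b) (hh'int : IntervalIntegrable h' volume a b) :
    (h b - h a) * f x - ∫ t in a..b, h' t * f t
      = (∫ t in a..x, (h t - h a) * f' t) - ∫ t in x..b, (h b - h t) * f' t := by
  have hax := uIcc_subset_uIcc_left hx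
  have hxb := uIcc_subset_uIcc_right hx
  have hh'f : IntervalIntegrable (fun t => h' t * f t) volume a b :=
    hh'int.mul_continuousOn fun t ht => (hf t ht).continuousAt.continuousWithinAt
  have left : ∫ t in a..x, (h t - h a) * f' t = (h x - h a) * f x - ∫ t in a..x, h' t * f t := by
    simpa using integral_mul_deriv_eq_deriv_mul
      (fun t ht => (hh t (hax ht)).sub_const (h a)) (fun t ht => hf t (hax ht))
      (hh'int.mono_set hax) (hf'int.mono_set hax)
  have right : ∫ t in x..b, (h b - h t) * f' t
      = -((h b - h x) * f x) + ∫ t in x..b, h' t * f t := by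
    simpa [intervalIntegral.integral_neg] using integral_mul_deriv_eq_deriv_mul
      (fun t ht => (hh t (hxb ht)).const_sub (h b)) (fun t ht => hf t (hxb ht))
      (hh'int.mono_set hxb).neg (hf'int.mono_set hxb)
  rw [left, right, ← integral_add_adjacent_intervals (hh'f.mono_set hax) (hh'f.mono_set hxb)]
  ring

theorem weighted_perturbed_ostrowski_special_weights_general
    (a b x γ Γ : ℝ) (f h f' h' : ℝ → ℝ)
    (hx : x ∈ Set.Ioo a b)
    (hf : ∀ t ∈ Set.Icc a b, HasDerivAt f (f' t) t)
    (hh : ∀ t ∈ Set.Icc a b, HasDerivAt h (h' t) t)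
    (hf'int : IntervalIntegrable f' volume a b)
    (hh'int : IntervalIntegrable h' volume a b)
    (hbound : ∀ t ∈ Set.Icc a b, γ ≤ f' t ∧ f' t ≤ Γ) :
    |(h b - h a) / (b - a) * f x
      - (γ + Γ) / 2 * (1 / (b - a)) *
          ((∫ t in a..x, h t - h a) - ∫ t in x..b, h b - h t)
      - (1 / (b - a)) * ∫ t in a..b, h' t * f t|
      ≤ (Γ - γ) / 2 * (1 / (b - a)) *
          ((∫ t in a..x, |h t - h a|) + ∫ t in x..b, |h b - h t|) := by
  obtain ⟨hax, hxb⟩ := hx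
  have hab : a < b := hax.trans hxb
  have hba : 0 < b - a := sub_pos.2 hab
  have hIcc : uIcc a b = Icc a b := uIcc_of_le hab.le
  have hx : x ∈ uIcc a b := mem_uIcc_of_le hax.le hxb.le
  have hhc : ContinuousOn h (Icc a b) := fun t ht => (hh t ht).continuousAt.continuousWithinAt
  have hax_sub : Icc a x ⊆ Icc a b := Icc_subset_Icc_right hxb.le
  have hxb_sub : Icc x b ⊆ Icc a b := Icc_subset_Icc_left hax.le
  have left := abs_integral_mul_sub_midpoint_mul_integral_le (g := fun t => h t - h a) hax.le
    ((hhc.mono hax_sub).sub continuousOn_const)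
    (hf'int.mono_set (uIcc_subset_uIcc_left hx)) fun t ht => hbound t (hax_sub ht)
  have right := abs_integral_mul_sub_midpoint_mul_integral_le (g := fun t => h b - h t) hxb.le
    (continuousOn_const.sub (hhc.mono hxb_sub))
    (hf'int.mono_set (uIcc_subset_uIcc_right hx)) fun t ht => hbound t (hxb_sub ht)
  have hid := generalized_montgomery_identity hx (hIcc ▸ hf) (hIcc ▸ hh) hf'int hh'int
  have hexpr : (h b - h a) / (b - a) * f x
      - (γ + Γ) / 2 * (1 / (b - a)) * ((∫ t in a..x, h t - h a) - ∫ t in x..b, h b - h t)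
      - (1 / (b - a)) * ∫ t in a..b, h' t * f t
      = (((∫ t in a..x, (h t - h a) * f' t) - (γ + Γ) / 2 * ∫ t in a..x, h t - h a)
          - ((∫ t in x..b, (h b - h t) * f' t) - (γ + Γ) / 2 * ∫ t in x..b, h b - h t))
        / (b - a) := by
    field_simp [hba.ne']
    linear_combination 2 * hid
  rw [hexpr, abs_div, abs_of_pos hba, div_le_iff₀ hba]
  refine (abs_sub _ _).trans ((add_le_add left right).trans_eq ?_)
  field_simp [hba.ne']

theorem weighted_perturbed_ostrowski_special_weights
    (a b x γ Γ : ℝ) (f h f' h' : ℝ → ℝ)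
    (hab : a < b) (hx : x ∈ Set.Ioo a b)
    (hf : ∀ t ∈ Set.Icc a b, HasDerivAt f (f' t) t)
    (hh : ∀ t ∈ Set.Icc a b, HasDerivAt h (h' t) t)
    (hf'int : IntervalIntegrable f' volume a b)
    (hh'int : IntervalIntegrable h' volume a b)
    (hbound : ∀ t ∈ Set.Icc a b, γ ≤ f' t ∧ f' t ≤ Γ) :
    |(h b - h a) / (b - a) * f x
      - (γ + Γ) / 2 * (1 / (b - a)) *
          ((∫ t in a..x, h t - h a) - ∫ t in x..b, h b - h t)
      - (1 / (b - a)) * ∫ t in a..b, h' t * f t|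
      ≤ (Γ - γ) / 2 * (1 / (b - a)) *
          ((∫ t in a..x, |h t - h a|) + ∫ t in x..b, |h b - h t|) :=
  weighted_perturbed_ostrowski_special_weights_general a b x γ Γ f h f' h' hx hf hh hf'int hh'int
    hbound
end

section
/- Let f : [a,b] → ℝ be differentiable with γ ≤ f'(t) ≤ Γ on [a,b]. Then for all x ∈ [a,b], |f(x) - ((γ+Γ)/2)·(x - (a+b)/2) - (1/(b-a))∫_a^b f(t)dt| ≤ ((Γ-γ)/2)·((x-a)² + (b-x)²)/(2(b-a)). -/
/-!
Subtracting the linear function `t ↦ t (γ + Γ)/2` from `f` turns the two-sided bound on `f'` into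
`|f' - (γ + Γ)/2| ≤ (Γ - γ)/2`, so the statement is the classical Ostrowski inequality. That one
follows from integrating by parts against the Montgomery kernel, `t - a` on `[a, x]` and `t - b`
on `[x, b]`, whose absolute value integrates to `((x - a)² + (b - x)²)/2`.
-/

open MeasureTheory intervalIntegral

open Set
open scoped Interval

theorem integral_sub_mul_deriv_eq {g g' : ℝ → ℝ} {u v : ℝ}
    (hg : ∀ t ∈ uIcc u v, HasDerivAt g (g' t) t) (hg' : IntervalIntegrable g' volume u v) :
    ∫ t in u..v, (t - u) * g' t = (v - u) * g v - ∫ t in u..v, g t := by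
  simpa using integral_mul_deriv_eq_deriv_mul (fun t _ => (hasDerivAt_id t).sub_const u) hg
    intervalIntegrable_const hg'

theorem abs_integral_sub_mul_le {φ : ℝ → ℝ} {u v M : ℝ} (hφ : ∀ t ∈ Ι u v, |φ t| ≤ M) :
    |∫ t in u..v, (t - u) * φ t| ≤ M * (v - u) ^ 2 / 2 := by
  have hint : IntegrableOn (fun t => M * |t - u| ^ 1) (Ι u v) :=
    (Continuous.intervalIntegrable (by fun_prop) u v).def'
  calc |∫ t in u..v, (t - u) * φ t| ≤ ∫ t in Ι u v, |(t - u) * φ t| := by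
        simpa only [Real.norm_eq_abs] using
          norm_integral_le_integral_norm_uIoc (f := fun t => (t - u) * φ t)
    _ ≤ ∫ t in Ι u v, M * |t - u| ^ 1 := by
        refine integral_mono_of_nonneg (.of_forall fun t => abs_nonneg _) hint
          (ae_restrict_of_forall_mem measurableSet_uIoc fun t ht => ?_)
        dsimp only
        rw [abs_mul, pow_one, mul_comm M]
        exact mul_le_mul_of_nonneg_left (hφ t ht) (abs_nonneg _)
    _ = M * (v - u) ^ 2 / 2 := by
        rw [MeasureTheory.integral_const_mul, integral_pow_abs_sub_uIoc, sq_abs]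
        ring

theorem abs_sub_mul_sub_integral_le {g g' : ℝ → ℝ} {u v M : ℝ}
    (hg : ∀ t ∈ uIcc u v, HasDerivAt g (g' t) t) (hg' : IntervalIntegrable g' volume u v)
    (hM : ∀ t ∈ uIcc u v, |g' t| ≤ M) :
    |(v - u) * g v - ∫ t in u..v, g t| ≤ M * (v - u) ^ 2 / 2 := by
  rw [← integral_sub_mul_deriv_eq hg hg']
  exact abs_integral_sub_mul_le fun t ht => hM t (uIoc_subset_uIcc ht)

theorem ostrowski_inequality {g g' : ℝ → ℝ} {a b x M : ℝ}
    (hg : ∀ t ∈ uIcc a b, HasDerivAt g (g' t) t) (hg' : IntervalIntegrable g' volume a b)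
    (hM : ∀ t ∈ uIcc a b, |g' t| ≤ M) (hx : x ∈ uIcc a b) :
    |(b - a) * g x - ∫ t in a..b, g t| ≤ M * ((x - a) ^ 2 + (b - x) ^ 2) / 2 := by
  have hax : uIcc a x ⊆ uIcc a b := uIcc_subset_uIcc_left hx
  have hbx : uIcc b x ⊆ uIcc a b := uIcc_comm b x ▸ uIcc_subset_uIcc_right hx
  have hgi : IntervalIntegrable g volume a b :=
    (HasDerivAt.continuousOn hg).intervalIntegrable
  have hleft := abs_sub_mul_sub_integral_le (fun t ht => hg t (hax ht)) (hg'.mono_set hax)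
    fun t ht => hM t (hax ht)
  have hright := abs_sub_mul_sub_integral_le (fun t ht => hg t (hbx ht)) (hg'.mono_set hbx)
    fun t ht => hM t (hbx ht)
  have hsplit : (b - a) * g x - ∫ t in a..b, g t
      = ((x - a) * g x - ∫ t in a..x, g t) - ((x - b) * g x - ∫ t in b..x, g t) := by
    rw [← integral_add_adjacent_intervals (hgi.mono_set hax) (hgi.mono_set hbx).symm,
      integral_symm x b]
    ring
  rw [hsplit]
  calc _ ≤ M * (x - a) ^ 2 / 2 + M * (x - b) ^ 2 / 2 :=
        (abs_sub _ _).trans (add_le_add hleft hright)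
    _ = M * ((x - a) ^ 2 + (b - x) ^ 2) / 2 := by ring

theorem perturbed_ostrowski_ujevic
    (a b γ Γ : ℝ) (f f' : ℝ → ℝ)
    (hab : a < b)
    (hf : ∀ t ∈ Set.Icc a b, HasDerivAt f (f' t) t)
    (hf'int : IntervalIntegrable f' volume a b)
    (hbound : ∀ t ∈ Set.Icc a b, γ ≤ f' t ∧ f' t ≤ Γ) :
    ∀ x ∈ Set.Icc a b,
      |f x - (γ + Γ) / 2 * (x - (a + b) / 2) - (1 / (b - a)) * ∫ t in a..b, f t|
        ≤ (Γ - γ) / 2 * (((x - a) ^ 2 + (b - x) ^ 2) / (2 * (b - a))) := by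
  intro x hx
  rw [← uIcc_of_le hab.le] at hf hbound hx
  set c := (γ + Γ) / 2 with hc
  have hg : ∀ t ∈ uIcc a b, HasDerivAt (fun t => f t - t * c) (f' t - c) t :=
    fun t ht => (hf t ht).sub (hasDerivAt_mul_const c)
  have hM : ∀ t ∈ uIcc a b, |f' t - c| ≤ (Γ - γ) / 2 := fun t ht => by
    obtain ⟨hγ, hΓ⟩ := hbound t ht
    exact abs_le.2 ⟨by linarith, by linarith⟩
  have hostrowski := ostrowski_inequality hg (hf'int.sub intervalIntegrable_const) hM hx
  have hintegral : ∫ t in a..b, (f t - t * c) = (∫ t in a..b, f t) - (b ^ 2 - a ^ 2) / 2 * c := by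
    rw [intervalIntegral.integral_sub (HasDerivAt.continuousOn hf).intervalIntegrable
      (intervalIntegrable_id.mul_const c), intervalIntegral.integral_mul_const, integral_id]
  have hba : 0 < b - a := sub_pos.2 hab
  have hcentered : f x - c * (x - (a + b) / 2) - (1 / (b - a)) * ∫ t in a..b, f t
      = ((b - a) * (f x - x * c) - ∫ t in a..b, (f t - t * c)) / (b - a) := by
    rw [hintegral]
    field_simp
    ring
  rw [hcentered, abs_div, abs_of_pos hba, div_le_iff₀ hba]
  calc _ ≤ (Γ - γ) / 2 * ((x - a) ^ 2 + (b - x) ^ 2) / 2 := hostrowski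
    _ = _ := by field_simp
end
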